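/- Let P be a finite nonempty subset of ℝ^d, let c ∈ ℝ^d and R > 0 satisfy ‖p − c‖ ≤ R for all p ∈ P, and let u ∈ ℝ^d be nonzero. Then for every p* ∈ P, p* maximizes ⟨·, u⟩ over P if and only if p* minimizes the angular distance arccos(⟨I(p, c), U(u)⟩ / (‖I(p, c)‖ · ‖U(u)‖)) over p ∈ P. That is, SAT converts maximum inner product search in ℝ^d into nearest neighbor search on angular distance in ℝ^{d+1}. -/

import Mathlib

open RealInnerProductSpace

/-- The item transformation of SAT: `I(p, c) = (p - c, √(R² - ‖p - c‖²)) ∈ ℝ^{d+1}`. -/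
noncomputable def satItem {d : ℕ} (R : ℝ) (c p : EuclideanSpace ℝ (Fin d)) :
    EuclideanSpace ℝ (Fin (d + 1)) :=
  (EuclideanSpace.equiv (Fin (d + 1)) ℝ).symm
    (Fin.snoc (fun j => (p - c) j) (Real.sqrt (R ^ 2 - ‖p - c‖ ^ 2)))

/-- The user transformation of SAT: `U(u) = ((R/‖u‖) • u, 0) ∈ ℝ^{d+1}`. -/
noncomputable def satUser {d : ℕ} (R : ℝ) (u : EuclideanSpace ℝ (Fin d)) :
    EuclideanSpace ℝ (Fin (d + 1)) :=
  (EuclideanSpace.equiv (Fin (d + 1)) ℝ).symm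
    (Fin.snoc (fun j => (R / ‖u‖) * u j) 0)

lemma satItem_apply {d : ℕ} (R : ℝ) (c p : EuclideanSpace ℝ (Fin d)) (i : Fin (d + 1)) :
    satItem R c p i =
      (Fin.snoc (fun j => (p - c) j) (Real.sqrt (R ^ 2 - ‖p - c‖ ^ 2)) : Fin (d + 1) → ℝ) i :=
  rfl

lemma satUser_apply {d : ℕ} (R : ℝ) (u : EuclideanSpace ℝ (Fin d)) (i : Fin (d + 1)) :
    satUser R u i = (Fin.snoc (fun j => (R / ‖u‖) * u j) 0 : Fin (d + 1) → ℝ) i :=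
  rfl

lemma inner_satItem_satUser {d : ℕ} (R : ℝ) (c u p : EuclideanSpace ℝ (Fin d)) :
    ⟪satItem R c p, satUser R u⟫ = (R / ‖u‖) * ⟪p - c, u⟫ := by
  simp only [PiLp.inner_apply, RCLike.inner_apply, conj_trivial, satItem_apply, satUser_apply]
  rw [Fin.sum_univ_castSucc]
  simp [Fin.snoc, Finset.mul_sum]
  congr 1; ext j; ring

lemma norm_satItem {d : ℕ} {R : ℝ} (hR : 0 ≤ R) {c p : EuclideanSpace ℝ (Fin d)}
    (h : ‖p - c‖ ≤ R) : ‖satItem R c p‖ = R := by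
  have hnn : 0 ≤ R ^ 2 - ‖p - c‖ ^ 2 := by nlinarith [norm_nonneg (p - c)]
  rw [EuclideanSpace.norm_eq, Fin.sum_univ_castSucc]
  simp only [satItem_apply, Fin.snoc_castSucc, Fin.snoc_last, Real.norm_eq_abs, sq_abs,
    Real.sq_sqrt hnn]
  have : ∑ j : Fin d, (p - c) j ^ 2 = ‖p - c‖ ^ 2 := by
    rw [EuclideanSpace.norm_eq, Real.sq_sqrt (by positivity)]
    simp [sq_abs]
  rw [this, show ‖p - c‖ ^ 2 + (R ^ 2 - ‖p - c‖ ^ 2) = R ^ 2 by ring, Real.sqrt_sq hR]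

lemma norm_satUser {d : ℕ} {R : ℝ} (hR : 0 ≤ R) {u : EuclideanSpace ℝ (Fin d)}
    (hu : u ≠ 0) : ‖satUser R u‖ = R := by
  have hu' : (0 : ℝ) < ‖u‖ := norm_pos_iff.mpr hu
  rw [EuclideanSpace.norm_eq, Fin.sum_univ_castSucc]
  simp only [satUser_apply, Fin.snoc_castSucc, Fin.snoc_last, Real.norm_eq_abs, sq_abs]
  have : ∑ j : Fin d, ((R / ‖u‖) * u j) ^ 2 = (R / ‖u‖) ^ 2 * ‖u‖ ^ 2 := by
    have : ∑ j : Fin d, u j ^ 2 = ‖u‖ ^ 2 := by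
      rw [EuclideanSpace.norm_eq, Real.sq_sqrt (by positivity)]
      simp [sq_abs]
    rw [← this, Finset.mul_sum]
    congr 1; ext j; ring
  rw [this]
  have h2 : (R / ‖u‖) ^ 2 * ‖u‖ ^ 2 + 0 ^ 2 = R ^ 2 := by
    field_simp
    norm_num
  rw [h2, Real.sqrt_sq hR]

/-- SAT converts MIPS in `ℝ^d` into NNS on angular distance in `ℝ^{d+1}`: `p*` maximizes
`⟪·, u⟫` over `P` iff it minimizes `arccos(⟪I(·,c), U(u)⟫ / (‖I(·,c)‖ · ‖U(u)‖))` over `P`. -/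
theorem sat_mips_to_angular_nns {d : ℕ} (P : Finset (EuclideanSpace ℝ (Fin d)))
    (hP : P.Nonempty) (c u : EuclideanSpace ℝ (Fin d)) (R : ℝ) (hR : 0 < R)
    (hPR : ∀ p ∈ P, ‖p - c‖ ≤ R) (hu : u ≠ 0) :
    ∀ pstar ∈ P,
      (∀ p ∈ P, ⟪p, u⟫ ≤ ⟪pstar, u⟫) ↔
      (∀ p ∈ P,
        Real.arccos (⟪satItem R c pstar, satUser R u⟫ /
            (‖satItem R c pstar‖ * ‖satUser R u‖)) ≤
          Real.arccos (⟪satItem R c p, satUser R u⟫ /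
            (‖satItem R c p‖ * ‖satUser R u‖))) := by
  intro pstar hps
  have hu' : (0 : ℝ) < ‖u‖ := norm_pos_iff.mpr hu
  have harg : ∀ p ∈ P,
      ⟪satItem R c p, satUser R u⟫ / (‖satItem R c p‖ * ‖satUser R u‖) =
        ⟪p - c, u⟫ / (R * ‖u‖) := by
    intro p hp
    rw [inner_satItem_satUser, norm_satItem hR.le (hPR p hp), norm_satUser hR.le hu]
    field_simp
  have hmem : ∀ p ∈ P, ⟪p - c, u⟫ / (R * ‖u‖) ∈ Set.Icc (-1 : ℝ) 1 := by
    intro p hp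
    have h1 : |⟪p - c, u⟫| ≤ R * ‖u‖ := by
      calc |⟪p - c, u⟫| ≤ ‖p - c‖ * ‖u‖ := abs_real_inner_le_norm _ _
        _ ≤ R * ‖u‖ := by
            exact mul_le_mul_of_nonneg_right (hPR p hp) (norm_nonneg u)
    have hpos : (0 : ℝ) < R * ‖u‖ := mul_pos hR hu'
    constructor
    · rw [le_div_iff₀ hpos]; nlinarith [abs_le.mp h1]
    · rw [div_le_one hpos]; exact (abs_le.mp h1).2
  have key : ∀ p ∈ P,
      (Real.arccos (⟪satItem R c pstar, satUser R u⟫ /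
          (‖satItem R c pstar‖ * ‖satUser R u‖)) ≤
        Real.arccos (⟪satItem R c p, satUser R u⟫ /
          (‖satItem R c p‖ * ‖satUser R u‖))) ↔ ⟪p, u⟫ ≤ ⟪pstar, u⟫ := by
    intro p hp
    rw [harg p hp, harg pstar hps]
    rw [Real.strictAntiOn_arccos.le_iff_ge (hmem pstar hps) (hmem p hp)]
    rw [div_le_div_iff_of_pos_right (mul_pos hR hu')]
    simp only [inner_sub_left]
    constructor <;> intro h <;> linarith
  constructor
  · intro h p hp
    exact (key p hp).mpr (h p hp)
  · intro h p hp
    exact (key p hp).mp (h p hp)
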